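/- arXiv:2010.07249 — 3 statements merged into one kernel-verified Lean document; each statement's English description precedes it below -/
import Mathlib

section
/- Let I be a nonempty finite index set, let y : I → {0, 1} be labels, and let q : I → [0,1] be soft environment assignments with Σ_{i∈I} q_i > 0 and Σ_{i∈I} (1 − q_i) > 0. Define A := (Σ_i q_i y_i)/(Σ_i q_i) and B := (Σ_i (1 − q_i) y_i)/(Σ_i (1 − q_i)). Then A − B ≤ 1, and A − B = 1 holds if and only if q_i = y_i for every i ∈ I. -/
theorem stmt5 {I : Type*} [Fintype I] [Nonempty I]
    (y q : I → ℝ)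
    (hy : ∀ i, y i = 0 ∨ y i = 1)
    (hq0 : ∀ i, 0 ≤ q i) (hq1 : ∀ i, q i ≤ 1)
    (hs1 : 0 < ∑ i, q i) (hs2 : 0 < ∑ i, (1 - q i)) :
    (∑ i, q i * y i) / (∑ i, q i) - (∑ i, (1 - q i) * y i) / (∑ i, (1 - q i)) ≤ 1 ∧
    ((∑ i, q i * y i) / (∑ i, q i) - (∑ i, (1 - q i) * y i) / (∑ i, (1 - q i)) = 1 ↔
      ∀ i, q i = y i) := by
  have hA : (∑ i, q i * y i) ≤ ∑ i, q i := by
    apply Finset.sum_le_sum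
    intro i _
    rcases hy i with h | h <;> simp [h] <;> exact hq0 i
  have hAle : (∑ i, q i * y i) / (∑ i, q i) ≤ 1 := by
    rw [div_le_one hs1]; exact hA
  have hB0 : 0 ≤ ∑ i, (1 - q i) * y i := by
    apply Finset.sum_nonneg
    intro i _
    rcases hy i with h | h <;> simp [h]
    linarith [hq1 i]
  have hBle : 0 ≤ (∑ i, (1 - q i) * y i) / (∑ i, (1 - q i)) :=
    div_nonneg hB0 hs2.le
  refine ⟨by linarith, ?_, ?_⟩
  · intro h
    have hA1 : (∑ i, q i * y i) / (∑ i, q i) = 1 := le_antisymm hAle (by linarith)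
    have hB1 : (∑ i, (1 - q i) * y i) / (∑ i, (1 - q i)) = 0 :=
      le_antisymm (by linarith) hBle
    have hA1' : ∑ i, q i * y i = ∑ i, q i := by
      field_simp at hA1; linarith
    have hB1' : ∑ i, (1 - q i) * y i = 0 := by
      rcases div_eq_zero_iff.mp hB1 with h' | h'
      · exact h'
      · linarith
    have h1 : ∑ i, q i * (1 - y i) = 0 := by
      have : ∑ i, q i * (1 - y i) = (∑ i, q i) - ∑ i, q i * y i := by
        rw [← Finset.sum_sub_distrib]; apply Finset.sum_congr rfl; intros; ring
      rw [this, hA1']; ring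
    have e1 : ∀ i ∈ Finset.univ, q i * (1 - y i) = 0 := by
      rw [← Finset.sum_eq_zero_iff_of_nonneg]
      · exact h1
      · intro i _
        rcases hy i with h' | h' <;> simp [h'] <;> exact hq0 i
    have e2 : ∀ i ∈ Finset.univ, (1 - q i) * y i = 0 := by
      rw [← Finset.sum_eq_zero_iff_of_nonneg]
      · exact hB1'
      · intro i _
        rcases hy i with h' | h' <;> simp [h']
        linarith [hq1 i]
    intro i
    have t1 := e1 i (Finset.mem_univ i)
    have t2 := e2 i (Finset.mem_univ i)
    rcases hy i with h' | h' <;> rw [h'] at t1 t2 ⊢ <;> nlinarith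
  · intro h
    have hA1 : ∑ i, q i * y i = ∑ i, q i := by
      apply Finset.sum_congr rfl
      intro i _
      rw [h i]; rcases hy i with h' | h' <;> simp [h']
    have hB1' : ∑ i, (1 - q i) * y i = 0 := by
      apply Finset.sum_eq_zero
      intro i _
      rw [h i]; rcases hy i with h' | h' <;> simp [h']
    rw [hA1, hB1', div_self hs1.ne', zero_div]; ring
end

section
/- Let I be a finite index set, B a finite set of bins, s : I → B an assignment of examples to bins, y : I → {0, 1} labels, and q : I → [0,1] soft environment assignments. Then Σ_{b∈B} ( Σ_{i : s(i)=b} y_i · (2q_i − 1) )² ≤ Σ_{b∈B} ( Σ_{i : s(i)=b} y_i )², and equality is attained by the label-split assignment q_i = y_i. -/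
theorem stmt6 {I B : Type*} [Fintype I] [Fintype B] [DecidableEq B]
    (s : I → B) (y q : I → ℝ)
    (hy : ∀ i, y i = 0 ∨ y i = 1)
    (hq0 : ∀ i, 0 ≤ q i) (hq1 : ∀ i, q i ≤ 1) :
    (∑ b : B, (∑ i ∈ Finset.univ.filter (fun i => s i = b), y i * (2 * q i - 1)) ^ 2) ≤
      (∑ b : B, (∑ i ∈ Finset.univ.filter (fun i => s i = b), y i) ^ 2) ∧
    ((∀ i, q i = y i) →
      (∑ b : B, (∑ i ∈ Finset.univ.filter (fun i => s i = b), y i * (2 * q i - 1)) ^ 2) =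
        (∑ b : B, (∑ i ∈ Finset.univ.filter (fun i => s i = b), y i) ^ 2)) := by
  have hy0 : ∀ i, 0 ≤ y i := fun i => by rcases hy i with h | h <;> simp [h]
  constructor
  · apply Finset.sum_le_sum
    intro b _
    apply sq_le_sq'
    · rw [neg_le, ← Finset.sum_neg_distrib]
      apply Finset.sum_le_sum
      intro i _
      have h0 := hq0 i; have h1 := hq1 i
      nlinarith [hy0 i]
    · apply Finset.sum_le_sum
      intro i _
      have h0 := hq0 i; have h1 := hq1 i
      nlinarith [hy0 i]
  · intro h
    apply Finset.sum_congr rfl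
    intro b _
    congr 1
    apply Finset.sum_congr rfl
    intro i _
    rw [h i]
    rcases hy i with hi | hi <;> rw [hi] <;> ring
end

section
/- Let Ω be a nonempty finite type equipped with a probability measure μ, and let y, z, e : Ω → {0,1} be random variables satisfying: μ(z = 1) = μ(z = 0) = 1/2; all four events {z = v, e = j} (v, j ∈ {0,1}) have positive probability; μ(y = 1 | z = 0, e = 1) = 1/10, μ(y = 1 | z = 0, e = 0) = 2/10, μ(y = 1 | z = 1, e = 1) = 9/10, μ(y = 1 | z = 1, e = 0) = 8/10. Define the alternative environment partition e′ : Ω → {0,1} by e′ = 1 iff y = z. Then the four events {z = v, e′ = j} (v, j ∈ {0,1}) have positive probability, and the sufficiency gap of the color classifier S = z with respect to e′ equals 1, which is strictly larger than its sufficiency gap 1/10 with respect to the handcrafted environments e. -/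
open MeasureTheory

/-- Conditional expectation of a `{0,1}`-valued random variable `y` given an event `A`:
`E[y | A] := μ({y = 1} ∩ A) / μ(A)`.  For `{0,1}`-valued `y` this coincides with the
conditional probability `μ(y = 1 | A)`. -/
noncomputable def cexp {Ω : Type*} [MeasurableSpace Ω] (μ : Measure Ω)
    (y : Ω → Fin 2) (A : Set Ω) : ℝ :=
  (μ ({ω | y ω = 1} ∩ A)).toReal / (μ A).toReal

/-- The sufficiency gap of the classifier `z` with respect to environments `e`. -/
noncomputable def gap {Ω : Type*} [MeasurableSpace Ω] (μ : Measure Ω)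
    (y z e : Ω → Fin 2) : ℝ :=
  ∑ v : Fin 2, (μ {ω | z ω = v}).toReal *
    |cexp μ y {ω | z ω = v ∧ e ω = 1} - cexp μ y {ω | z ω = v ∧ e ω = 0}|

/-!
Under `e' = [y = z]` every cell `{z = v, e' = j}` carries a single label, so its conditional
expectation is `0` or `1`, and the two cells over each value of `z` carry different labels:
every summand of the gap is `μ(z = v) · 1`, and these masses add up to `1`. The cells are
non-null because the handcrafted cell `{z = v, e = 1}` has a label frequency strictly between
`0` and `1`, so both labels occur in it with positive mass.
-/

section

variable {Ω : Type*} {y z e e' : Ω → Fin 2}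

theorem setOf_and_agreement_eq_one (he' : ∀ ω, e' ω = if y ω = z ω then 1 else 0)
    (v : Fin 2) : {ω | z ω = v ∧ e' ω = 1} = {ω | z ω = v ∧ y ω = v} := by
  ext ω
  simp only [Set.mem_ofPred_eq, he']
  grind

theorem setOf_and_agreement_eq_zero (he' : ∀ ω, e' ω = if y ω = z ω then 1 else 0)
    (v : Fin 2) : {ω | z ω = v ∧ e' ω = 0} = {ω | z ω = v ∧ y ω ≠ v} := by
  ext ω
  simp only [Set.mem_ofPred_eq, he']
  grind

variable [MeasurableSpace Ω] {μ : Measure Ω} {A B : Set Ω}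

theorem cexp_eq_zero_of_disjoint (h : Disjoint {ω | y ω = 1} A) : cexp μ y A = 0 := by
  simp [cexp, h.inter_eq]

theorem cexp_eq_one_of_subset [IsFiniteMeasure μ] (h : A ⊆ {ω | y ω = 1}) (hA : μ A ≠ 0) :
    cexp μ y A = 1 := by
  rw [cexp, Set.inter_eq_right.mpr h,
    div_self (ENNReal.toReal_ne_zero.mpr ⟨hA, measure_ne_top μ A⟩)]

theorem abs_cexp_sub_eq_one [IsFiniteMeasure μ] (hA : A ⊆ {ω | y ω = 1}) (hA₀ : μ A ≠ 0)
    (hB : Disjoint {ω | y ω = 1} B) : |cexp μ y A - cexp μ y B| = 1 := by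
  rw [cexp_eq_one_of_subset hA hA₀, cexp_eq_zero_of_disjoint hB, sub_zero, abs_one]

theorem measure_inter_pos_of_cexp_pos (h : 0 < cexp μ y A) : 0 < μ ({ω | y ω = 1} ∩ A) := by
  refine pos_iff_ne_zero.mpr fun h₀ => ?_
  simp [cexp, h₀] at h

theorem measure_inter_pos_of_cexp_lt_one [IsFiniteMeasure μ] (hA : 0 < μ A)
    (h : cexp μ y A < 1) : 0 < μ ({ω | y ω ≠ 1} ∩ A) := by
  refine pos_iff_ne_zero.mpr fun h₀ => h.not_ge ?_
  have hle : μ A ≤ μ ({ω | y ω = 1} ∩ A) :=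
    calc μ A ≤ μ ({ω | y ω = 1} ∩ A) + μ ({ω | y ω ≠ 1} ∩ A) := by
          simpa [Set.sdiff_eq, Set.compl_ofPred, Set.inter_comm] using
            measure_le_inter_add_sdiff μ A {ω | y ω = 1}
      _ = μ ({ω | y ω = 1} ∩ A) := by rw [h₀, add_zero]
  rw [cexp, le_div_iff₀ (ENNReal.toReal_pos hA.ne' (measure_ne_top μ A)), one_mul]
  exact ENNReal.toReal_mono (measure_ne_top μ _) hle

theorem gap_eq_mul_of_abs_cexp_sub_eq {c : ℝ}
    (h : ∀ v,
      |cexp μ y {ω | z ω = v ∧ e ω = 1} - cexp μ y {ω | z ω = v ∧ e ω = 0}| = c) :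
    gap μ y z e = (∑ v : Fin 2, (μ {ω | z ω = v}).toReal) * c := by
  simp only [gap, h, Finset.sum_mul]

theorem measure_agreement_cell_pos [IsFiniteMeasure μ]
    (he' : ∀ ω, e' ω = if y ω = z ω then 1 else 0) {v : Fin 2} (hA : A ⊆ {ω | z ω = v})
    (hA₀ : 0 < μ A) (hmixed : cexp μ y A ∈ Set.Ioo 0 1) (j : Fin 2) :
    0 < μ {ω | z ω = v ∧ e' ω = j} := by
  have h1 := measure_inter_pos_of_cexp_pos hmixed.1
  have h0 := measure_inter_pos_of_cexp_lt_one hA₀ hmixed.2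
  obtain rfl | rfl : j = 0 ∨ j = 1 := by omega
  · rw [setOf_and_agreement_eq_zero he']
    obtain rfl | rfl : v = 0 ∨ v = 1 := by omega
    · exact h1.trans_le (measure_mono fun ω ⟨hy, hω⟩ => ⟨hA hω, by grind⟩)
    · exact h0.trans_le (measure_mono fun ω ⟨hy, hω⟩ => ⟨hA hω, hy⟩)
  · rw [setOf_and_agreement_eq_one he']
    obtain rfl | rfl : v = 0 ∨ v = 1 := by omega
    · exact h0.trans_le (measure_mono fun ω ⟨hy, hω⟩ => ⟨hA hω, by grind⟩)
    · exact h1.trans_le (measure_mono fun ω ⟨hy, hω⟩ => ⟨hA hω, hy⟩)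

theorem abs_cexp_agreement_sub_eq_one [IsFiniteMeasure μ]
    (he' : ∀ ω, e' ω = if y ω = z ω then 1 else 0) {v : Fin 2}
    (hpos : ∀ j, μ {ω | z ω = v ∧ e' ω = j} ≠ 0) :
    |cexp μ y {ω | z ω = v ∧ e' ω = 1} - cexp μ y {ω | z ω = v ∧ e' ω = 0}| = 1 := by
  have hpos₁ := hpos 1
  have hpos₀ := hpos 0
  rw [setOf_and_agreement_eq_one he'] at hpos₁ ⊢
  rw [setOf_and_agreement_eq_zero he'] at hpos₀ ⊢
  obtain rfl | rfl : v = 0 ∨ v = 1 := by omega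
  · rw [abs_sub_comm]
    exact abs_cexp_sub_eq_one (fun ω hω => by grind) hpos₀
      (Set.disjoint_left.mpr fun ω h1 h2 => by grind)
  · exact abs_cexp_sub_eq_one (fun ω hω => hω.2) hpos₁
      (Set.disjoint_left.mpr fun ω h1 h2 => by grind)

end

theorem stmt9_general {Ω : Type*} [MeasurableSpace Ω]
    (μ : Measure Ω) [IsProbabilityMeasure μ]
    (y z e e' : Ω → Fin 2)
    (hz1 : μ {ω | z ω = 1} = 1 / 2) (hz0 : μ {ω | z ω = 0} = 1 / 2)
    (hpos : ∀ v j : Fin 2, 0 < μ {ω | z ω = v ∧ e ω = j})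
    (h01 : cexp μ y {ω | z ω = 0 ∧ e ω = 1} = 1 / 10)
    (h00 : cexp μ y {ω | z ω = 0 ∧ e ω = 0} = 2 / 10)
    (h11 : cexp μ y {ω | z ω = 1 ∧ e ω = 1} = 9 / 10)
    (h10 : cexp μ y {ω | z ω = 1 ∧ e ω = 0} = 8 / 10)
    (he' : ∀ ω, e' ω = if y ω = z ω then 1 else 0) :
    (∀ v j : Fin 2, 0 < μ {ω | z ω = v ∧ e' ω = j}) ∧
    gap μ y z e' = 1 ∧ gap μ y z e = 1 / 10 ∧ gap μ y z e < gap μ y z e' := by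
  have hmixed (v : Fin 2) : cexp μ y {ω | z ω = v ∧ e ω = 1} ∈ Set.Ioo 0 1 := by
    fin_cases v <;> norm_num [h01, h11]
  have hpos' (v j : Fin 2) : 0 < μ {ω | z ω = v ∧ e' ω = j} :=
    measure_agreement_cell_pos he' (fun _ hω => hω.1) (hpos v 1) (hmixed v) j
  have hsum : ∑ v : Fin 2, (μ {ω | z ω = v}).toReal = 1 := by
    norm_num [Fin.sum_univ_two, hz0, hz1]
  have hgap' : gap μ y z e' = 1 := by
    rw [gap_eq_mul_of_abs_cexp_sub_eq fun v =>
      abs_cexp_agreement_sub_eq_one he' fun j => (hpos' v j).ne', hsum, one_mul]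
  have hgap : gap μ y z e = 1 / 10 := by
    rw [gap_eq_mul_of_abs_cexp_sub_eq (c := 1 / 10) fun v => ?_, hsum, one_mul]
    fin_cases v <;> norm_num [h00, h01, h10, h11, abs_of_neg, abs_of_pos]
  exact ⟨hpos', hgap', hgap, by rw [hgap, hgap']; norm_num⟩

theorem stmt9 {Ω : Type*} [Fintype Ω] [Nonempty Ω] [MeasurableSpace Ω]
    (μ : Measure Ω) [IsProbabilityMeasure μ]
    (y z e e' : Ω → Fin 2)
    (hz1 : μ {ω | z ω = 1} = 1 / 2) (hz0 : μ {ω | z ω = 0} = 1 / 2)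
    (hpos : ∀ v j : Fin 2, 0 < μ {ω | z ω = v ∧ e ω = j})
    (h01 : cexp μ y {ω | z ω = 0 ∧ e ω = 1} = 1 / 10)
    (h00 : cexp μ y {ω | z ω = 0 ∧ e ω = 0} = 2 / 10)
    (h11 : cexp μ y {ω | z ω = 1 ∧ e ω = 1} = 9 / 10)
    (h10 : cexp μ y {ω | z ω = 1 ∧ e ω = 0} = 8 / 10)
    (he' : ∀ ω, e' ω = if y ω = z ω then 1 else 0) :
    (∀ v j : Fin 2, 0 < μ {ω | z ω = v ∧ e' ω = j}) ∧
    gap μ y z e' = 1 ∧ gap μ y z e = 1 / 10 ∧ gap μ y z e < gap μ y z e' :=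
  stmt9_general μ y z e e' hz1 hz0 hpos h01 h00 h11 h10 he'
end
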